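/- Let F be a deterministic single-outputting p-filter in which every state is reachable from the initial state. Then the minimum cardinality of a clique cover of the compatibility graph G(F) that covers all vertices and satisfies Zip(F) equals the minimum number of states of a deterministic p-filter that output simulates F. -/

import Mathlib

/-- A procrustean filter (p-filter): states `V`, a nonempty set of initial
states, observations `Y`, a transition function `tr : V → V → Set Y`,
an output space `C`, and an output function `out : V → Set C` mapping each
state to a nonempty set of outputs. -/
structure PFilter (V Y C : Type) where
  init : Set V
  init_nonempty : init.Nonempty
  tr : V → V → Set Y
  out : V → Set C
  out_nonempty : ∀ v, (out v).Nonempty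

namespace PFilter

variable {V V' Y C : Type}

/-- `F.Reaches v s u` : the observation string `s` reaches state `u` from `v`. -/
inductive Reaches (F : PFilter V Y C) : V → List Y → V → Prop
  | nil (v : V) : Reaches F v [] v
  | cons {v w u : V} {y : Y} {s : List Y} :
      y ∈ F.tr v w → Reaches F w s u → Reaches F v (y :: s) u

/-- The set of states reached by `s` when traced from state `v`. -/
def reachedFrom (F : PFilter V Y C) (v : V) (s : List Y) : Set V :=
  {u | F.Reaches v s u}

/-- The set of states reached by `s` from some initial state. -/
def reached (F : PFilter V Y C) (s : List Y) : Set V :=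
  {u | ∃ v0 ∈ F.init, F.Reaches v0 s u}

/-- The extensions of a state `v`: strings that do not crash from `v`. -/
def extensions (F : PFilter V Y C) (v : V) : Set (List Y) :=
  {s | ∃ u, F.Reaches v s u}

/-- The interaction language of `F`: extensions of initial states. -/
def language (F : PFilter V Y C) : Set (List Y) :=
  {s | ∃ v0 ∈ F.init, ∃ u, F.Reaches v0 s u}

/-- The filter output for string `s`: union of outputs of states reached by `s`. -/
def outputs (F : PFilter V Y C) (s : List Y) : Set C :=
  ⋃ v ∈ F.reached s, F.out v

/-- `F'` output simulates `F`. -/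
def OutputSimulates (F' : PFilter V' Y C) (F : PFilter V Y C) : Prop :=
  ∀ s ∈ F.language, (F'.outputs s).Nonempty ∧ F'.outputs s ⊆ F.outputs s

/-- `F` is deterministic: one initial state, and outgoing transition labels
from any state are pairwise disjoint. -/
def Deterministic (F : PFilter V Y C) : Prop :=
  (∃ v0, F.init = {v0}) ∧
    ∀ v1 v2 v3 : V, v2 ≠ v3 → F.tr v1 v2 ∩ F.tr v1 v3 = ∅

/-- `F` is single-outputting: every state's output set is a singleton. -/
def SingleOutputting (F : PFilter V Y C) : Prop :=
  ∀ v, ∃ o, F.out v = {o}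

/-- Two states are compatible: they agree on the outputs of all common extensions. -/
def Compatible (F : PFilter V Y C) (v w : V) : Prop :=
  ∀ s ∈ F.extensions v ∩ F.extensions w,
    ∀ v' ∈ F.reachedFrom v s, ∀ w' ∈ F.reachedFrom w s, F.out v' = F.out w'

/-- A set of mutually compatible states (a clique in the compatibility graph). -/
def MutuallyCompatible (F : PFilter V Y C) (U : Set V) : Prop :=
  ∀ v ∈ U, ∀ w ∈ U, F.Compatible v w

/-- A set of states is group compatible: there is a common output on
all their extensions. -/
def GroupCompatible (F : PFilter V Y C) (U : Set V) : Prop :=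
  ∀ s : List Y, (∃ u ∈ U, s ∈ F.extensions u) →
    (⋂ w ∈ {w | ∃ u ∈ U, w ∈ F.reachedFrom u s}, F.out w).Nonempty

/-- A state `v` of `F` corresponds to a state `v'` of `F'` if some string
reaches both from the respective initial states. -/
def Corresponds (F : PFilter V Y C) (F' : PFilter V' Y C) (v : V) (v' : V') : Prop :=
  ∃ s : List Y, v ∈ F.reached s ∧ v' ∈ F'.reached s

/-- `K_{v'}` : the set of states of `F` corresponding to a state `v'` of `F'`. -/
def corrSet (F : PFilter V Y C) (F' : PFilter V' Y C) (v' : V') : Set V :=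
  {v | Corresponds F F' v v'}

/-- The induced cover `Q(F,F') = {K_{v'} : v' ∈ V(F')}`. -/
def inducedCover (F : PFilter V Y C) (F' : PFilter V' Y C) : Set (Set V) :=
  Set.range (corrSet F F')

/-- The relation induced on `V(F)` by an output-simulating filter `F'`. -/
def inducedRel (F : PFilter V Y C) (F' : PFilter V' Y C) (v w : V) : Prop :=
  ∃ v' : V', Corresponds F F' v v' ∧ Corresponds F F' w v'

/-- `(U,W)_y` is a zipper constraint: `U` and `W` are sets of mutually
compatible states and `W` is the set of `y`-successors of `U`. -/
def ZipperConstraint (F : PFilter V Y C) (U W : Set V) (y : Y) : Prop :=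
  F.MutuallyCompatible U ∧ F.MutuallyCompatible W ∧
    W = {w | ∃ u ∈ U, y ∈ F.tr u w}

/-- A collection of sets `K` satisfies the zipper constraints of `F`. -/
def SatisfiesZip (F : PFilter V Y C) (K : Set (Set V)) : Prop :=
  ∀ U W y, F.ZipperConstraint U W y → (∃ S ∈ K, U ⊆ S) → ∃ T ∈ K, W ⊆ T

/-- `K` is a clique cover of the compatibility graph of `F` covering all vertices. -/
def IsCliqueCover (F : PFilter V Y C) (K : Set (Set V)) : Prop :=
  (∀ S ∈ K, F.MutuallyCompatible S) ∧ ⋃₀ K = Set.univ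

/-- `(U,W)_y` is a generalized zipper constraint: `U` and `W` are group
compatible and `W` is the set of `y`-successors of `U`. -/
def GenZipperConstraint (F : PFilter V Y C) (U W : Set V) (y : Y) : Prop :=
  F.GroupCompatible U ∧ F.GroupCompatible W ∧
    W = {w | ∃ u ∈ U, y ∈ F.tr u w}

/-- A collection of sets `K` satisfies the generalized zipper constraints of `F`. -/
def SatisfiesGenZip (F : PFilter V Y C) (K : Set (Set V)) : Prop :=
  ∀ U W y, F.GenZipperConstraint U W y → (∃ S ∈ K, U ⊆ S) → ∃ T ∈ K, W ⊆ T

/-- `K` is a cover of `V(F)` by group-compatible sets. -/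
def IsGroupCover (F : PFilter V Y C) (K : Set (Set V)) : Prop :=
  (∀ S ∈ K, F.GroupCompatible S) ∧ ⋃₀ K = Set.univ

/-- `F'` is an induced filter `M(F,K)`: one state per set of `K`; a state is
initial iff its set contains an initial state; output is the intersection of
the outputs over its set; transitions are inherited, and for each state and
observation only a single edge is kept, going to a set that contains all
successors under that observation. -/
def IsInducedFilter (F : PFilter V Y C) (K : Set (Set V))
    (F' : PFilter {S // S ∈ K} Y C) : Prop :=
  F'.init = {S : {S // S ∈ K} | ∃ v ∈ F.init, v ∈ S.1} ∧
  (∀ S, F'.out S = ⋂ v ∈ S.1, F.out v) ∧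
  (∀ S T (y : Y), y ∈ F'.tr S T → ∃ v ∈ S.1, ∃ w ∈ T.1, y ∈ F.tr v w) ∧
  (∀ S T (y : Y), y ∈ F'.tr S T → ∀ w, (∃ v ∈ S.1, y ∈ F.tr v w) → w ∈ T.1) ∧
  (∀ S (y : Y), (∃ v ∈ S.1, ∃ w, y ∈ F.tr v w) → ∃! T, y ∈ F'.tr S T)

/-- `F'` is the merged filter of `F` under cover `K` *without* the pruning
step: initial states are sets containing an initial state, outputs are the
common outputs of each set, and transitions are fully inherited. -/
def IsMergedFilter (F : PFilter V Y C) (K : Set (Set V))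
    (F' : PFilter {S // S ∈ K} Y C) : Prop :=
  F'.init = {S : {S // S ∈ K} | ∃ v ∈ F.init, v ∈ S.1} ∧
  (∀ S, F'.out S = ⋂ v ∈ S.1, F.out v) ∧
  (∀ S T, F'.tr S T = ⋃ v ∈ S.1, ⋃ w ∈ T.1, F.tr v w)

end PFilter

/-!
A deterministic filter `F'` that output simulates `F` induces the cover of `V(F)` by the sets
`K_{v'}` of states of `F` reached by a common string with `v'`. Two states in one `K_{v'}` are
compatible: `F'` reaches the same state after any common extension from them, and its output
there lies in both (singleton) outputs of `F`; determinism of `F'` makes the cover satisfy the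
zipper constraints. Conversely, a zipper-satisfying clique cover `K` yields a deterministic
filter on the cliques: the zipper constraint for the `y`-successors of a clique `S` supplies a
clique to move to, and the states of a clique share their output (compatibility on the empty
string).
-/

namespace PFilter

variable {V V' Y C : Type}

section Reaches

variable {F : PFilter V Y C}

lemma Reaches.append {v m u : V} {p s : List Y}
    (h₁ : F.Reaches v p m) (h₂ : F.Reaches m s u) : F.Reaches v (p ++ s) u := by
  induction h₁ with
  | nil => exact h₂
  | cons hy _ ih => exact .cons hy (ih h₂)

lemma reaches_append_iff {v u : V} {p s : List Y} :
    F.Reaches v (p ++ s) u ↔ ∃ m, F.Reaches v p m ∧ F.Reaches m s u := by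
  refine ⟨fun h => ?_, fun ⟨m, h₁, h₂⟩ => h₁.append h₂⟩
  induction p generalizing v with
  | nil => exact ⟨v, .nil v, h⟩
  | cons y p ih =>
    obtain _ | ⟨hy, h'⟩ := h
    obtain ⟨m, h₁, h₂⟩ := ih h'
    exact ⟨m, .cons hy h₁, h₂⟩

lemma reaches_singleton_iff {v u : V} {y : Y} : F.Reaches v [y] u ↔ y ∈ F.tr v u :=
  ⟨fun | .cons hy (.nil _) => hy, fun hy => .cons hy (.nil u)⟩

lemma mem_reached_append {s : List Y} {w u : V} {t : List Y}
    (hw : w ∈ F.reached s) (h : F.Reaches w t u) : u ∈ F.reached (s ++ t) :=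
  let ⟨v₀, hv₀, hs⟩ := hw
  ⟨v₀, hv₀, hs.append h⟩

lemma mem_language_of_mem_reached {s : List Y} {u : V} (hu : u ∈ F.reached s) :
    s ∈ F.language :=
  let ⟨v₀, hv₀, h⟩ := hu
  ⟨v₀, hv₀, u, h⟩

end Reaches

namespace Deterministic

variable {F : PFilter V Y C} (hF : F.Deterministic)
include hF

lemma tr_unique {v w₁ w₂ : V} {y : Y} (h₁ : y ∈ F.tr v w₁) (h₂ : y ∈ F.tr v w₂) :
    w₁ = w₂ :=
  by_contra fun hne => (hF.2 v w₁ w₂ hne).subset ⟨h₁, h₂⟩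

lemma reaches_unique {v u₁ u₂ : V} {s : List Y}
    (h₁ : F.Reaches v s u₁) (h₂ : F.Reaches v s u₂) : u₁ = u₂ := by
  induction h₁ with
  | nil => cases h₂; rfl
  | cons hy _ ih =>
    obtain _ | ⟨hy', h₂'⟩ := h₂
    exact ih (hF.tr_unique hy' hy ▸ h₂')

lemma reached_unique {s : List Y} {u₁ u₂ : V}
    (h₁ : u₁ ∈ F.reached s) (h₂ : u₂ ∈ F.reached s) : u₁ = u₂ := by
  obtain ⟨v₀, hinit⟩ := hF.1
  obtain ⟨a, ha, h₁⟩ := h₁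
  obtain ⟨b, hb, h₂⟩ := h₂
  rw [hinit, Set.mem_singleton_iff] at ha hb
  subst ha hb
  exact hF.reaches_unique h₁ h₂

lemma outputs_eq {s : List Y} {u : V} (hu : u ∈ F.reached s) : F.outputs s = F.out u := by
  refine subset_antisymm ?_ (Set.subset_biUnion_of_mem hu)
  exact Set.iUnion₂_subset fun w hw => by rw [hF.reached_unique hw hu]

lemma reached_append {p : List Y} {v : V} (hv : v ∈ F.reached p) (s : List Y) :
    F.reached (p ++ s) = F.reachedFrom v s := by
  ext u
  refine ⟨fun ⟨v₀, hv₀, h⟩ => ?_, fun h => mem_reached_append hv h⟩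
  obtain ⟨m, hm, hmu⟩ := reaches_append_iff.1 h
  rwa [hF.reached_unique ⟨v₀, hv₀, hm⟩ hv] at hmu

lemma outputs_append_eq {p q : List Y} {v : V} (hp : v ∈ F.reached p) (hq : v ∈ F.reached q)
    (s : List Y) : F.outputs (p ++ s) = F.outputs (q ++ s) := by
  simp only [outputs, hF.reached_append hp, hF.reached_append hq]

end Deterministic

lemma SingleOutputting.out_eq {F : PFilter V Y C} (hF : F.SingleOutputting) {v w : V} {c : C}
    (hv : c ∈ F.out v) (hw : c ∈ F.out w) : F.out v = F.out w := by
  obtain ⟨a, ha⟩ := hF v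
  obtain ⟨b, hb⟩ := hF w
  rw [ha, Set.mem_singleton_iff] at hv
  rw [hb, Set.mem_singleton_iff] at hw
  rw [ha, hb, ← hv, ← hw]

lemma MutuallyCompatible.out_eq {F : PFilter V Y C} {S : Set V} (hS : F.MutuallyCompatible S)
    {v w : V} (hv : v ∈ S) (hw : w ∈ S) : F.out v = F.out w :=
  hS v hv w hw [] ⟨⟨v, .nil v⟩, ⟨w, .nil w⟩⟩ v (.nil v) w (.nil w)

lemma MutuallyCompatible.successors {F : PFilter V Y C} {S : Set V}
    (hS : F.MutuallyCompatible S) (y : Y) :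
    F.MutuallyCompatible {w | ∃ u ∈ S, y ∈ F.tr u w} := by
  rintro w₁ ⟨u₁, hu₁, hy₁⟩ w₂ ⟨u₂, hu₂, hy₂⟩ s - x₁ hx₁ x₂ hx₂
  exact hS u₁ hu₁ u₂ hu₂ (y :: s) ⟨⟨x₁, .cons hy₁ hx₁⟩, ⟨x₂, .cons hy₂ hx₂⟩⟩
    x₁ (.cons hy₁ hx₁) x₂ (.cons hy₂ hx₂)

section InducedCover

variable {F : PFilter V Y C} {F' : PFilter V' Y C}

lemma Corresponds.tr {v w : V} {v' w' : V'} {y : Y} (h : Corresponds F F' v v')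
    (hy : y ∈ F.tr v w) (hy' : y ∈ F'.tr v' w') : Corresponds F F' w w' :=
  let ⟨s, hv, hv'⟩ := h
  ⟨s ++ [y], mem_reached_append hv (reaches_singleton_iff.2 hy),
    mem_reached_append hv' (reaches_singleton_iff.2 hy')⟩

lemma Corresponds.exists_tr (hF' : F'.Deterministic) (hsim : F'.OutputSimulates F)
    {v w : V} {v' : V'} {y : Y} (h : Corresponds F F' v v') (hy : y ∈ F.tr v w) :
    ∃ w', y ∈ F'.tr v' w' := by
  obtain ⟨s, hv, hv'⟩ := h
  obtain ⟨c, hc⟩ := (hsim _ (mem_language_of_mem_reached (mem_reached_append hv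
    (reaches_singleton_iff.2 hy)))).1
  obtain ⟨w', hw', -⟩ := Set.mem_iUnion₂.1 hc
  rw [hF'.reached_append hv'] at hw'
  exact ⟨w', reaches_singleton_iff.1 hw'⟩

lemma Corresponds.compatible (hF : F.Deterministic) (hso : F.SingleOutputting)
    (hF' : F'.Deterministic) (hsim : F'.OutputSimulates F) {v w : V} {v' : V'}
    (hv : Corresponds F F' v v') (hw : Corresponds F F' w v') : F.Compatible v w := by
  rintro s - v₁ hv₁ w₁ hw₁
  obtain ⟨p, hvp, hv'p⟩ := hv
  obtain ⟨q, hwq, hv'q⟩ := hw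
  have hv₁p : v₁ ∈ F.reached (p ++ s) := mem_reached_append hvp hv₁
  have hw₁q : w₁ ∈ F.reached (q ++ s) := mem_reached_append hwq hw₁
  obtain ⟨⟨c, hc⟩, hsub⟩ := hsim _ (mem_language_of_mem_reached hv₁p)
  have hc' : c ∈ F'.outputs (q ++ s) := hF'.outputs_append_eq hv'p hv'q s ▸ hc
  have hcv : c ∈ F.out v₁ := hF.outputs_eq hv₁p ▸ hsub hc
  have hcw : c ∈ F.out w₁ :=
    hF.outputs_eq hw₁q ▸ (hsim _ (mem_language_of_mem_reached hw₁q)).2 hc'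
  exact hso.out_eq hcv hcw

lemma inducedCover_isCliqueCover (hF : F.Deterministic) (hso : F.SingleOutputting)
    (hreach : ∀ v : V, ∃ s : List Y, v ∈ F.reached s)
    (hF' : F'.Deterministic) (hsim : F'.OutputSimulates F) :
    IsCliqueCover F (inducedCover F F') := by
  refine ⟨?_, Set.eq_univ_of_forall fun v => ?_⟩
  · rintro _ ⟨v', rfl⟩ v hv w hw
    exact hv.compatible hF hso hF' hsim hw
  · obtain ⟨s, hv⟩ := hreach v
    obtain ⟨c, hc⟩ := (hsim _ (mem_language_of_mem_reached hv)).1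
    obtain ⟨v', hv', -⟩ := Set.mem_iUnion₂.1 hc
    exact ⟨corrSet F F' v', ⟨v', rfl⟩, s, hv, hv'⟩

lemma inducedCover_satisfiesZip (hF' : F'.Deterministic) (hsim : F'.OutputSimulates F) :
    SatisfiesZip F (inducedCover F F') := by
  rintro U W y ⟨-, -, rfl⟩ ⟨_, ⟨v', rfl⟩, hU⟩
  by_cases hy' : ∃ w', y ∈ F'.tr v' w'
  · obtain ⟨w', hw'⟩ := hy'
    exact ⟨_, ⟨w', rfl⟩, fun w ⟨u, hu, hy⟩ => (hU hu).tr hy hw'⟩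
  · exact ⟨_, ⟨v', rfl⟩, fun w ⟨u, hu, hy⟩ => (hy' ((hU hu).exists_tr hF' hsim hy)).elim⟩

lemma ncard_inducedCover_le [Finite V'] (F : PFilter V Y C) (F' : PFilter V' Y C) :
    (inducedCover F F').ncard ≤ Nat.card V' := by
  rw [← Nat.card_coe_set_eq]
  exact Finite.card_range_le _

end InducedCover

section CliqueFilter

-- The output is read off a chosen state `rep S`, since `K` may contain `∅`.
def cliqueFilter (F : PFilter V Y C) (K : Set (Set V)) (S₀ : K) (next : K → Y → K)
    (rep : K → V) : PFilter K Y C where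
  init := {S₀}
  init_nonempty := ⟨S₀, rfl⟩
  tr S T := {y | (∃ v ∈ S.1, ∃ w, y ∈ F.tr v w) ∧ T = next S y}
  out S := F.out (rep S)
  out_nonempty S := F.out_nonempty (rep S)

variable {F : PFilter V Y C} {K : Set (Set V)} {S₀ : K} {next : K → Y → K} {rep : K → V}

lemma cliqueFilter_deterministic : (F.cliqueFilter K S₀ next rep).Deterministic := by
  refine ⟨⟨S₀, rfl⟩, fun S T T' hne => Set.eq_empty_of_forall_notMem ?_⟩
  rintro y ⟨⟨-, rfl⟩, -, rfl⟩
  exact hne rfl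

lemma Reaches.cliqueFilter (hnext : ∀ S y, {w | ∃ u ∈ S.1, y ∈ F.tr u w} ⊆ next S y)
    {v u : V} {s : List Y} (h : F.Reaches v s u) {S : K} (hv : v ∈ S.1) :
    ∃ T, (F.cliqueFilter K S₀ next rep).Reaches S s T ∧ u ∈ T.1 := by
  induction h generalizing S with
  | nil => exact ⟨S, .nil S, hv⟩
  | cons hy _ ih =>
    obtain ⟨T, hT, hu⟩ := ih (hnext S _ ⟨_, hv, hy⟩)
    exact ⟨T, .cons ⟨⟨_, hv, _, hy⟩, rfl⟩ hT, hu⟩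

lemma cliqueFilter_outputSimulates (hS₀ : F.init ⊆ S₀.1)
    (hnext : ∀ S y, {w | ∃ u ∈ S.1, y ∈ F.tr u w} ⊆ next S y)
    (hrep : ∀ S : K, ∀ v ∈ S.1, F.out (rep S) = F.out v) :
    (F.cliqueFilter K S₀ next rep).OutputSimulates F := by
  rintro s ⟨v₀, hv₀, u, hu⟩
  obtain ⟨T, hT, huT⟩ := hu.cliqueFilter (S₀ := S₀) (rep := rep) hnext (hS₀ hv₀)
  rw [cliqueFilter_deterministic.outputs_eq ⟨S₀, rfl, hT⟩]
  exact ⟨F.out_nonempty _,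
    (hrep T u huT).trans_subset (Set.subset_biUnion_of_mem ⟨v₀, hv₀, hu⟩)⟩

lemma exists_cliqueFilter (hF : F.Deterministic) (hK : IsCliqueCover F K)
    (hzip : SatisfiesZip F K) :
    ∃ F' : PFilter K Y C, F'.Deterministic ∧ F'.OutputSimulates F := by
  obtain ⟨v₀, hinit⟩ := hF.1
  obtain ⟨S₀, hS₀K, hv₀⟩ := Set.mem_sUnion.1 (hK.2 ▸ Set.mem_univ v₀ : v₀ ∈ ⋃₀ K)
  have hnext (S : K) (y : Y) : ∃ T : K, {w | ∃ u ∈ S.1, y ∈ F.tr u w} ⊆ T.1 :=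
    let ⟨T, hT, hsub⟩ := hzip _ _ y ⟨hK.1 S S.2, (hK.1 S S.2).successors y, rfl⟩
      ⟨S, S.2, subset_rfl⟩
    ⟨⟨T, hT⟩, hsub⟩
  have hrep (S : K) : ∃ r, ∀ v ∈ S.1, F.out r = F.out v := by
    obtain hS | ⟨r, hr⟩ := S.1.eq_empty_or_nonempty
    · exact ⟨v₀, by simp [hS]⟩
    · exact ⟨r, fun v hv => (hK.1 S S.2).out_eq hr hv⟩
  choose next hnext using hnext
  choose rep hrep using hrep
  refine ⟨F.cliqueFilter K ⟨S₀, hS₀K⟩ next rep, cliqueFilter_deterministic, ?_⟩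
  exact cliqueFilter_outputSimulates (by simpa [hinit]) hnext hrep

end CliqueFilter

end PFilter

/-- The minimum cardinality of a zipper-satisfying clique cover
equals the minimum number of states of a deterministic output-simulating
filter. -/
theorem min_cover_card_eq_min_filter_card {V Y C : Type} [Finite V]
    (F : PFilter V Y C) (hdet : F.Deterministic) (hso : F.SingleOutputting)
    (hreach : ∀ v : V, ∃ s : List Y, v ∈ F.reached s) :
    sInf {n : ℕ | ∃ K : Set (Set V),
        PFilter.IsCliqueCover F K ∧ PFilter.SatisfiesZip F K ∧ K.ncard = n} =
    sInf {n : ℕ | ∃ (V' : Type) (_ : Finite V') (F' : PFilter V' Y C),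
        F'.Deterministic ∧ F'.OutputSimulates F ∧ Nat.card V' = n} := by
  refine csInf_eq_csInf_of_forall_exists_le ?_ ?_
  · rintro _ ⟨K, hK, hzip, rfl⟩
    obtain ⟨F', hdet', hsim⟩ := PFilter.exists_cliqueFilter hdet hK hzip
    exact ⟨_, ⟨K, inferInstance, F', hdet', hsim, rfl⟩, (Nat.card_coe_set_eq K).le⟩
  · rintro _ ⟨V', _, F', hdet', hsim, rfl⟩
    exact ⟨_, ⟨_, PFilter.inducedCover_isCliqueCover hdet hso hreach hdet' hsim,
      PFilter.inducedCover_satisfiesZip hdet' hsim, rfl⟩, PFilter.ncard_inducedCover_le F F'⟩
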